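/- Let M ∈ U(2,1;O₂) fix q∞, i.e. M·(1,0,0)ᵗ is a complex scalar multiple of (1,0,0)ᵗ. Then M or −M lies in the subgroup of GL(3,ℂ) generated by the four matrices R₁, R₂, R₃, T. Equivalently, the stabiliser of q∞ in PU(2,1;O₂) = U(2,1;O₂)/{±I} is generated by the classes of R₁, R₂, R₃ and T. -/

import Mathlib

noncomputable section

open Matrix Complex

/-- The Gram matrix `J` of the Hermitian form
`⟨z,w⟩ = z₁ conj w₃ + z₂ conj w₂ + z₃ conj w₁` of signature (2,1). -/
def Jmat : Matrix (Fin 3) (Fin 3) ℂ := !![0,0,1; 0,1,0; 1,0,0]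

lemma Jmat_mul_Jmat : Jmat * Jmat = 1 := by
  simp [Jmat, Matrix.mul_fin_three, Matrix.one_fin_three]

/-- A matrix satisfying `Mᴴ J M = J` (i.e. `M ∈ U(2,1;ℂ)`), viewed as an element of
`GL (Fin 3) ℂ`; its inverse is `J Mᴴ J`. -/
def toGL (M : Matrix (Fin 3) (Fin 3) ℂ) (h : Mᴴ * Jmat * M = Jmat) : GL (Fin 3) ℂ where
  val := M
  inv := Jmat * Mᴴ * Jmat
  inv_val := by
    calc (Jmat * Mᴴ * Jmat) * M = Jmat * (Mᴴ * Jmat * M) := by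
          simp only [Matrix.mul_assoc]
    _ = 1 := by rw [h, Jmat_mul_Jmat]
  val_inv := by
    apply mul_eq_one_comm.mp
    calc (Jmat * Mᴴ * Jmat) * M = Jmat * (Mᴴ * Jmat * M) := by
          simp only [Matrix.mul_assoc]
    _ = 1 := by rw [h, Jmat_mul_Jmat]

/-- The ring of integers `O₂ = ℤ[i√2]` of `ℚ(√-2)`, as a subset of `ℂ`. -/
def O2 : Set ℂ := {z | ∃ a b : ℤ, z = (a : ℂ) + (b : ℂ) * (Complex.I * (√2 : ℝ))}

def I₀ : Matrix (Fin 3) (Fin 3) ℂ := !![0,0,1; 0,-1,0; 1,0,0]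

def R₁ : Matrix (Fin 3) (Fin 3) ℂ := !![1,0,0; 0,-1,0; 0,0,1]

def R₂ : Matrix (Fin 3) (Fin 3) ℂ := !![1,2,-2; 0,-1,2; 0,0,1]

def R₃ : Matrix (Fin 3) (Fin 3) ℂ :=
  !![1, -(Complex.I*(√2:ℝ)), -1; 0, -1, Complex.I*(√2:ℝ); 0,0,1]

def T : Matrix (Fin 3) (Fin 3) ℂ := !![1, 0, Complex.I*(√2:ℝ); 0,1,0; 0,0,1]

lemma hI₀ : I₀ᴴ * Jmat * I₀ = Jmat := by
  ext i j
  fin_cases i <;> fin_cases j <;>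
    simp [Matrix.mul_apply, Fin.sum_univ_three, Jmat, I₀, Matrix.conjTranspose_apply,
      Matrix.vecHead, Matrix.vecTail]

lemma hR₁ : R₁ᴴ * Jmat * R₁ = Jmat := by
  ext i j
  fin_cases i <;> fin_cases j <;>
    simp [Matrix.mul_apply, Fin.sum_univ_three, Jmat, R₁, Matrix.conjTranspose_apply,
      Matrix.vecHead, Matrix.vecTail]

lemma hR₂ : R₂ᴴ * Jmat * R₂ = Jmat := by
  ext i j
  fin_cases i <;> fin_cases j <;>
    simp [Matrix.mul_apply, Fin.sum_univ_three, Jmat, R₂, Matrix.conjTranspose_apply,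
      Matrix.vecHead, Matrix.vecTail, map_ofNat] <;> norm_num

lemma hR₃ : R₃ᴴ * Jmat * R₃ = Jmat := by
  ext i j
  fin_cases i <;> fin_cases j <;>
    simp [Matrix.mul_apply, Fin.sum_univ_three, Jmat, R₃, Matrix.conjTranspose_apply,
      Matrix.vecHead, Matrix.vecTail] <;>
    ring_nf <;>
    simp [Complex.ext_iff, ← Complex.ofReal_pow, Real.sq_sqrt]

lemma hT : Tᴴ * Jmat * T = Jmat := by
  ext i j
  fin_cases i <;> fin_cases j <;>
    simp [Matrix.mul_apply, Fin.sum_univ_three, Jmat, T, Matrix.conjTranspose_apply,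
      Matrix.vecHead, Matrix.vecTail]

/-!
A matrix fixing `q∞` is upper triangular, and unitarity forces its diagonal to be `(ε, δ, ε)` with
`ε, δ` units of `O₂`, i.e. `±1`. Up to sign it is therefore `diag(1, δ, 1) · N(x, y)`, where
`N(x, y)` is the Heisenberg translation with `y + ȳ + |x|² = 0`, and `diag(1, -1, 1) = R₁`.
The Heisenberg translations `R₂R₁ = N(-2, -2)`, `R₃R₁ = N(ω, -1)` and `T = N(0, ω)`, `ω = i√2`,
generate all integral ones: for `x = a + bω` the condition `y + ȳ + |x|² = 0` forces `a` to be
even, and `N(x, y)` is then a product of powers of these three.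
-/

open ComplexConjugate

local notation "ω" => Complex.I * ((√2 : ℝ) : ℂ)

lemma omega_mul_omega : ω * ω = -2 := by
  have h : ((√2 : ℝ) : ℂ) * ((√2 : ℝ) : ℂ) = 2 := by
    rw [← ofReal_mul, Real.mul_self_sqrt zero_le_two]; norm_num
  linear_combination (I * I) * h + 2 * I_mul_I

lemma conj_omega : conj ω = -ω := by simp

lemma conj_add_mul_omega (a b : ℤ) : conj (a + b * ω) = a - b * ω := by
  simp [conj_omega, sub_eq_add_neg]

lemma normSq_add_mul_omega (a b : ℤ) : normSq (a + b * ω) = a ^ 2 + 2 * b ^ 2 := by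
  simp [normSq_apply]; ring_nf; simp

lemma eq_zero_and_eq_one_or_neg_one_of_sq_add_two_mul_sq_eq_one {a b : ℤ}
    (h : a ^ 2 + 2 * b ^ 2 = 1) : b = 0 ∧ (a = 1 ∨ a = -1) := by
  have hb : b = 0 := by nlinarith [sq_nonneg a, sq_nonneg b]
  subst hb
  exact ⟨rfl, sq_eq_one_iff.mp (by simpa using h)⟩

lemma eq_one_or_neg_one_of_conj_mul_eq_one {z w : ℂ} (hz : z ∈ O2) (hw : w ∈ O2)
    (h : conj z * w = 1) : z = 1 ∨ z = -1 := by
  obtain ⟨a, b, rfl⟩ := hz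
  obtain ⟨c, d, rfl⟩ := hw
  have hnorm : (a ^ 2 + 2 * b ^ 2) * (c ^ 2 + 2 * d ^ 2) = 1 := by
    have := congrArg normSq h
    rw [normSq_mul, normSq_conj, normSq_add_mul_omega, normSq_add_mul_omega, map_one] at this
    exact_mod_cast this
  have hab := Int.eq_one_of_mul_eq_one_right (by positivity) hnorm
  obtain ⟨rfl, rfl | rfl⟩ := eq_zero_and_eq_one_or_neg_one_of_sq_add_two_mul_sq_eq_one hab <;> simp

lemma neg_mem_O2 {z : ℂ} (hz : z ∈ O2) : -z ∈ O2 := by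
  obtain ⟨a, b, rfl⟩ := hz
  exact ⟨-a, -b, by push_cast; ring⟩

lemma conjTranspose_mul_Jmat_mul_apply (M : Matrix (Fin 3) (Fin 3) ℂ) (i j : Fin 3) :
    (Mᴴ * Jmat * M) i j = conj (M 0 i) * M 2 j + conj (M 1 i) * M 1 j + conj (M 2 i) * M 0 j := by
  simp [Matrix.mul_apply, Fin.sum_univ_three, Jmat]; ring

lemma conj_apply_zero_zero_mul_apply_two_two {M : Matrix (Fin 3) (Fin 3) ℂ}
    (hU : Mᴴ * Jmat * M = Jmat) (h10 : M 1 0 = 0) (h20 : M 2 0 = 0) :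
    conj (M 0 0) * M 2 2 = 1 := by
  have e := congrFun₂ hU 0 2
  rw [conjTranspose_mul_Jmat_mul_apply] at e
  simpa [h10, h20, Jmat] using e

def heisTranslation (x y : ℂ) : Matrix (Fin 3) (Fin 3) ℂ := !![1, x, y; 0, 1, -conj x; 0, 0, 1]

lemma heisTranslation_mul (x y x' y' : ℂ) :
    heisTranslation x y * heisTranslation x' y' =
      heisTranslation (x + x') (y + y' - x * conj x') := by
  ext i j
  fin_cases i <;> fin_cases j <;> simp [heisTranslation, Matrix.mul_apply, Fin.sum_univ_three]
  · ring
  · ring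

lemma heisTranslation_zero : heisTranslation 0 0 = 1 := by
  simp [heisTranslation, Matrix.one_fin_three]

lemma eq_diagonal_mul_heisTranslation {M : Matrix (Fin 3) (Fin 3) ℂ} (hU : Mᴴ * Jmat * M = Jmat)
    (h10 : M 1 0 = 0) (h20 : M 2 0 = 0) (h00 : M 0 0 = 1) :
    M = diagonal ![1, M 1 1, 1] * heisTranslation (M 0 1) (M 0 2) ∧ conj (M 1 1) * M 1 1 = 1 ∧
      M 0 2 + conj (M 0 2) + M 0 1 * conj (M 0 1) = 0 := by
  have e : ∀ i j, conj (M 0 i) * M 2 j + conj (M 1 i) * M 1 j + conj (M 2 i) * M 0 j = Jmat i j :=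
    fun i j ↦ by rw [← conjTranspose_mul_Jmat_mul_apply, hU]
  have h22 : M 2 2 = 1 := by
    simpa [h00] using conj_apply_zero_zero_mul_apply_two_two hU h10 h20
  have h21 : M 2 1 = 0 := by simpa [h00, h10, h20, Jmat] using e 0 1
  have h11 : conj (M 1 1) * M 1 1 = 1 := by simpa [h21, Jmat] using e 1 1
  have h12 : M 1 2 = -(M 1 1 * conj (M 0 1)) := by
    have e12 : conj (M 0 1) + conj (M 1 1) * M 1 2 = 0 := by simpa [h21, h22, Jmat] using e 1 2
    linear_combination M 1 1 * e12 - M 1 2 * h11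
  have hnull : M 0 2 + conj (M 0 2) + M 0 1 * conj (M 0 1) = 0 := by
    have e22 := e 2 2
    simp only [h12, h22, map_neg, map_mul, conj_conj, map_one, Jmat, of_apply,
      cons_val] at e22
    linear_combination e22 - M 0 1 * conj (M 0 1) * h11
  refine ⟨?_, h11, hnull⟩
  ext i j
  fin_cases i <;> fin_cases j <;> simp [heisTranslation, h00, h10, h20, h21, h22, h12]

lemma R₂_mul_R₁ : R₂ * R₁ = heisTranslation (-2) (-2) := by
  simp [R₁, R₂, heisTranslation, map_ofNat]

lemma R₁_mul_R₂ : R₁ * R₂ = heisTranslation 2 (-2) := by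
  simp [R₁, R₂, heisTranslation, map_ofNat]

lemma R₃_mul_R₁ : R₃ * R₁ = heisTranslation ω (-1) := by
  simp [R₁, R₃, heisTranslation]

lemma R₁_mul_R₃ : R₁ * R₃ = heisTranslation (-ω) (-1) := by
  simp [R₁, R₃, heisTranslation]

lemma T_eq_heisTranslation : T = heisTranslation 0 ω := by
  simp [T, heisTranslation]

lemma Jmat_mul_conjTranspose_T_mul_Jmat : Jmat * Tᴴ * Jmat = heisTranslation 0 (-ω) := by
  ext i j
  fin_cases i <;> fin_cases j <;>
    simp only [Matrix.mul_apply, Fin.sum_univ_three, Matrix.conjTranspose_apply] <;>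
    simp [T, Jmat, heisTranslation]

def Γ : Subgroup (GL (Fin 3) ℂ) :=
  Subgroup.closure {toGL R₁ hR₁, toGL R₂ hR₂, toGL R₃ hR₃, toGL T hT}

def Γmat : Submonoid (Matrix (Fin 3) (Fin 3) ℂ) := Γ.toSubmonoid.map (Units.coeHom _)

lemma coe_mem_Γmat {U : GL (Fin 3) ℂ} (hU : U ∈ Γ) : (U : Matrix (Fin 3) (Fin 3) ℂ) ∈ Γmat :=
  ⟨U, hU, rfl⟩

lemma R₁_mem_Γmat : R₁ ∈ Γmat := coe_mem_Γmat (U := toGL R₁ hR₁) (Subgroup.subset_closure (by simp))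

lemma R₂_mem_Γmat : R₂ ∈ Γmat := coe_mem_Γmat (U := toGL R₂ hR₂) (Subgroup.subset_closure (by simp))

lemma R₃_mem_Γmat : R₃ ∈ Γmat := coe_mem_Γmat (U := toGL R₃ hR₃) (Subgroup.subset_closure (by simp))

lemma T_mem_Γmat : T ∈ Γmat := coe_mem_Γmat (U := toGL T hT) (Subgroup.subset_closure (by simp))

lemma Jmat_mul_conjTranspose_T_mul_Jmat_mem_Γmat : Jmat * Tᴴ * Jmat ∈ Γmat :=
  coe_mem_Γmat (inv_mem (Subgroup.subset_closure (by simp)) : (toGL T hT)⁻¹ ∈ Γ)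

lemma Submonoid.apply_mem_of_int_step {M : Type*} [Monoid M] {S : Submonoid M} {a b : M}
    (ha : a ∈ S) (hb : b ∈ S) {f : ℤ → M} (h0 : f 0 = 1) (hsucc : ∀ k, f (k + 1) = f k * a)
    (hpred : ∀ k, f (k - 1) = f k * b) (k : ℤ) : f k ∈ S := by
  induction k using Int.induction_on with
  | zero => exact h0 ▸ S.one_mem
  | succ k ih => exact hsucc k ▸ S.mul_mem ih ha
  | pred k ih => exact hpred (-k) ▸ S.mul_mem ih hb

-- The `k`-th power of `heisTranslation x y`, whose inverse is `heisTranslation (-x) (conj y)`.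
lemma heisTranslation_int_mul_mem {x y : ℂ} (hxy : heisTranslation x y ∈ Γmat)
    (hxy' : heisTranslation (-x) (conj y) ∈ Γmat) (hnull : y + conj y + x * conj x = 0) (k : ℤ) :
    heisTranslation (k * x) (k * y - k * (k - 1) / 2 * x * conj x) ∈ Γmat := by
  refine Submonoid.apply_mem_of_int_step hxy hxy'
    (f := fun k : ℤ ↦ heisTranslation (k * x) (k * y - k * (k - 1) / 2 * x * conj x))
    (by simp [heisTranslation_zero]) (fun k ↦ ?_) (fun k ↦ ?_) k
  · rw [heisTranslation_mul]
    congr 1 <;> push_cast <;> ring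
  · rw [heisTranslation_mul]
    congr 1
    · push_cast; ring
    · rw [map_neg]
      push_cast
      linear_combination (-1 : ℂ) * hnull

lemma heisTranslation_mem_Γmat_of_mem_O2 {x y : ℂ} (hx : x ∈ O2) (hy : y ∈ O2)
    (hnull : y + conj y + x * conj x = 0) : heisTranslation x y ∈ Γmat := by
  have hA := heisTranslation_int_mul_mem (R₂_mul_R₁ ▸ mul_mem R₂_mem_Γmat R₁_mem_Γmat)
    (by simpa [map_ofNat] using R₁_mul_R₂ ▸ mul_mem R₁_mem_Γmat R₂_mem_Γmat) (by norm_num [map_ofNat])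
  have hB := heisTranslation_int_mul_mem (R₃_mul_R₁ ▸ mul_mem R₃_mem_Γmat R₁_mem_Γmat)
    (by simpa using R₁_mul_R₃ ▸ mul_mem R₁_mem_Γmat R₃_mem_Γmat)
    (by simp; linear_combination -omega_mul_omega)
  have hC := heisTranslation_int_mul_mem (T_eq_heisTranslation ▸ T_mem_Γmat)
    (by simpa using Jmat_mul_conjTranspose_T_mul_Jmat ▸ Jmat_mul_conjTranspose_T_mul_Jmat_mem_Γmat)
    (by simp)
  obtain ⟨a₁, a₂, rfl⟩ := hx
  obtain ⟨b₁, b₂, rfl⟩ := hy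
  rw [mul_conj, normSq_add_mul_omega, conj_add_mul_omega] at hnull
  have hb₁ : 2 * b₁ + a₁ ^ 2 + 2 * a₂ ^ 2 = 0 := by
    have h : ((2 * b₁ + a₁ ^ 2 + 2 * a₂ ^ 2 : ℤ) : ℂ) = 0 := by
      push_cast at hnull ⊢; linear_combination hnull
    exact_mod_cast h
  obtain ⟨r, rfl⟩ : Even a₁ :=
    (Int.even_pow' two_ne_zero).mp ⟨-b₁ - a₂ ^ 2, by linarith⟩
  convert mul_mem (mul_mem (hA (-r)) (hB a₂)) (hC (b₂ - 2 * r * a₂)) using 1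
  rw [heisTranslation_mul, heisTranslation_mul]
  congr 1
  · push_cast; ring
  · have hb₁' : (2 * b₁ + (r + r) ^ 2 + 2 * a₂ ^ 2 : ℂ) = 0 := by exact_mod_cast hb₁
    simp only [map_neg, map_mul, map_intCast, map_ofNat, map_zero, mul_zero, conj_I, conj_ofReal]
    push_cast
    linear_combination (1 / 2 : ℂ) * hb₁' - (a₂ * (a₂ - 1) / 2 : ℂ) * omega_mul_omega

lemma mem_Γmat_of_fixes_qInf {M : Matrix (Fin 3) (Fin 3) ℂ} (hM : ∀ i j, M i j ∈ O2)
    (hU : Mᴴ * Jmat * M = Jmat) (h10 : M 1 0 = 0) (h20 : M 2 0 = 0) (h00 : M 0 0 = 1) :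
    M ∈ Γmat := by
  obtain ⟨hM_eq, h11, hnull⟩ := eq_diagonal_mul_heisTranslation hU h10 h20 h00
  rw [hM_eq]
  refine mul_mem ?_ (heisTranslation_mem_Γmat_of_mem_O2 (hM 0 1) (hM 0 2) hnull)
  rcases eq_one_or_neg_one_of_conj_mul_eq_one (hM 1 1) (hM 1 1) h11 with h | h <;> rw [h]
  · rw [diagonal_vec3, ← one_fin_three]
    exact one_mem Γmat
  · rw [diagonal_vec3]
    exact R₁_mem_Γmat

/-- **Generators of the stabiliser of `q∞` in `PU(2,1;O2)`**: every matrix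
`M ∈ U(2,1;O2)` fixing `q∞` (i.e. mapping `(1,0,0)ᵗ` to a scalar multiple of itself)
agrees, up to sign, with an element of the subgroup of `GL(3,ℂ)` generated by
`R₁, R₂, R₃, T`. -/
theorem stabiliser_O2_generated
    (M : Matrix (Fin 3) (Fin 3) ℂ)
    (hM : ∀ i j, M i j ∈ O2)
    (hU : Mᴴ * Jmat * M = Jmat)
    (hfix : ∃ c : ℂ, M.mulVec ![1,0,0] = c • ![1,0,0]) :
    ∃ U ∈ Subgroup.closure
        ({toGL R₁ hR₁, toGL R₂ hR₂, toGL R₃ hR₃, toGL T hT} :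
          Set (GL (Fin 3) ℂ)),
      (U : Matrix (Fin 3) (Fin 3) ℂ) = M ∨ (U : Matrix (Fin 3) (Fin 3) ℂ) = -M := by
  obtain ⟨c, hc⟩ := hfix
  have h10 : M 1 0 = 0 := by simpa [mulVec, dotProduct, Fin.sum_univ_three] using congrFun hc 1
  have h20 : M 2 0 = 0 := by simpa [mulVec, dotProduct, Fin.sum_univ_three] using congrFun hc 2
  rcases eq_one_or_neg_one_of_conj_mul_eq_one (hM 0 0) (hM 2 2)
    (conj_apply_zero_zero_mul_apply_two_two hU h10 h20) with h00 | h00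
  · obtain ⟨U, hUΓ, hUM⟩ := mem_Γmat_of_fixes_qInf hM hU h10 h20 h00
    exact ⟨U, hUΓ, Or.inl hUM⟩
  · obtain ⟨U, hUΓ, hUM⟩ := mem_Γmat_of_fixes_qInf (M := -M) (fun i j ↦ neg_mem_O2 (hM i j))
      (by simpa using hU) (by simp [h10]) (by simp [h20]) (by simp [h00])
    exact ⟨U, hUΓ, Or.inr hUM⟩

end
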